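/- Let K be a unital commutative ring and A an associative unital K-superalgebra, free as a K-module with a basis containing the identity, and let m+n ≥ 3. In the Steinberg Lie superalgebra st(m,n,A) the following identities hold for homogeneous a, b, c ∈ A and pairwise distinct indices i, j, k, l: (1) H_ij(a,b) = −(−1)^{(|i|+|j|+|a|)(|i|+|j|+|b|)} H_ji(b,a); (2) [H_ij(a,b), F_ik(c)] = F_ik(abc); (3) [H_ij(a,b), F_ki(c)] = −(−1)^{(|a|+|b|)(|i|+|k|+|c|)} F_ki(cab); (4) [H_ij(a,b), F_kj(c)] = (−1)^{(|i|+|j|+|a|)(|i|+|j|+|b|)+(|a|+|b|)(|j|+|k|+|c|)} F_kj(cba); (5) [H_ij(a,b), F_ij(c)] = F_ij(abc + (−1)^{|i|+|j|+|a||b|+|b||c|+|c||a|} cba); (6) [H_ij(a,b), F_kl(c)] = 0; (7) [h(a,b), F_1i(c)] = F_1i((ab − (−1)^{|a||b|}ba)c) for i ≥ 2; (8) [h(a,b), F_jk(c)] = 0 for j, k ≥ 2. -/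

import Mathlib

/-- The sign `(-1)^d` for `d : ZMod 2`, as an integer. -/
def sgn (d : ZMod 2) : ℤ := if d = 0 then 1 else -1

section Preamble

variable (K : Type*) [CommRing K]

/-- A `ℤ/2`-grading on a `K`-module `M`, turning it into a `K`-supermodule:
two graded pieces which cover `M` and intersect trivially. -/
structure SuperModuleStr (M : Type*) [AddCommGroup M] [Module K M] where
  grading : ZMod 2 → Submodule K M
  covers : ∀ x : M, ∃ x0 ∈ grading 0, ∃ x1 ∈ grading 1, x = x0 + x1
  indep : ∀ x ∈ grading 0, x ∈ grading 1 → x = 0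

/-- An (associative, unital) superalgebra structure on a `K`-algebra `A`:
a supermodule grading compatible with the multiplication and the unit. -/
structure SuperAlgStr (A : Type*) [Ring A] [Algebra K A] extends SuperModuleStr K A where
  one_mem : (1 : A) ∈ grading 0
  mul_mem : ∀ {d e : ZMod 2} {a b : A}, a ∈ grading d → b ∈ grading e → a * b ∈ grading (d + e)

/-- A Lie superalgebra structure on a `K`-module `L`: a supermodule grading together with a
bilinear bracket which is compatible with the grading and satisfies super skew-symmetry,
the super Jacobi identity, and `⁅x,x⁆ = 0` for even `x`. -/
structure LieSuperStr (L : Type*) [AddCommGroup L] [Module K L] extends SuperModuleStr K L where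
  bracket : L →ₗ[K] L →ₗ[K] L
  bracket_mem : ∀ {d e : ZMod 2} {x y : L}, x ∈ grading d → y ∈ grading e →
    bracket x y ∈ grading (d + e)
  skew : ∀ {d e : ZMod 2} (x y : L), x ∈ grading d → y ∈ grading e →
    bracket x y = -(sgn (d * e)) • bracket y x
  jacobi : ∀ {d e f : ZMod 2} (x y z : L), x ∈ grading d → y ∈ grading e → z ∈ grading f →
    sgn (d * f) • bracket (bracket x y) z + sgn (d * e) • bracket (bracket y z) x +
      sgn (e * f) • bracket (bracket z x) y = 0
  even_sq : ∀ x ∈ grading 0, bracket x x = 0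

variable {K}

/-- The parity of the index `i` in the graded index set `{1,…,m} ∪ {m+1,…,m+n}`
(written `0`-based: the first `m` indices are even, the remaining ones odd). -/
def idxdeg (m : ℕ) {N : ℕ} (i : Fin N) : ZMod 2 := if (i : ℕ) < m then 0 else 1

/-- A homomorphism of Lie superalgebras: a linear map commuting with the brackets and
preserving the gradings. -/
structure LieSuperHom {L L' : Type*} [AddCommGroup L] [Module K L]
    [AddCommGroup L'] [Module K L'] (LS : LieSuperStr K L) (LS' : LieSuperStr K L') where
  toLin : L →ₗ[K] L'
  map_bracket : ∀ x y : L, toLin (LS.bracket x y) = LS'.bracket (toLin x) (toLin y)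
  map_grading : ∀ (d : ZMod 2), ∀ x ∈ LS.grading d, toLin x ∈ LS'.grading d

/-- The Lie subalgebra (as a `K`-submodule) generated by a subset: the smallest submodule
containing the set and closed under the bracket. -/
def lieSpan {L : Type*} [AddCommGroup L] [Module K L] (LS : LieSuperStr K L) (s : Set L) :
    Submodule K L :=
  sInf {p : Submodule K L | s ⊆ p ∧ ∀ x ∈ p, ∀ y ∈ p, LS.bracket x y ∈ p}

/-- A family `F i j : A →ₗ[K] L` (used for `i ≠ j`) satisfying the defining relations of the
Steinberg Lie superalgebra `st(m,n,A)`, with `F i j a` homogeneous of degree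
`|i| + |j| + |a|`. -/
structure SteinbergFam {A L : Type*} [Ring A] [Algebra K A] [AddCommGroup L] [Module K L]
    (AS : SuperAlgStr K A) (LS : LieSuperStr K L) (m n : ℕ) where
  F : Fin (m + n) → Fin (m + n) → A →ₗ[K] L
  F_mem : ∀ {d : ZMod 2} (i j : Fin (m + n)) (a : A), i ≠ j → a ∈ AS.grading d →
    F i j a ∈ LS.grading (idxdeg m i + idxdeg m j + d)
  rel_mul : ∀ (i j k : Fin (m + n)), i ≠ j → j ≠ k → i ≠ k → ∀ a b : A,
    LS.bracket (F i j a) (F j k b) = F i k (a * b)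
  rel_zero : ∀ (i j k l : Fin (m + n)), i ≠ j → k ≠ l → j ≠ k → i ≠ l → ∀ a b : A,
    LS.bracket (F i j a) (F k l b) = 0

namespace SteinbergFam

variable {A L : Type*} [Ring A] [Algebra K A] [AddCommGroup L] [Module K L]
  {AS : SuperAlgStr K A} {LS : LieSuperStr K L} {m n : ℕ}

/-- `H_{ij}(a,b) = ⁅F_{ij}(a), F_{ji}(b)⁆`. -/
def H (S : SteinbergFam AS LS m n) (i j : Fin (m + n)) (a b : A) : L :=
  LS.bracket (S.F i j a) (S.F j i b)

/-- `h(a,b) = H_{12}(a,b) - (-1)^{|a||b|} H_{12}(1, ba)`, for `a, b` homogeneous of degrees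
`d, e` (written with `0`-based indices `0`, `1`). -/
def h (S : SteinbergFam AS LS m n) (hN : 1 < m + n) (d e : ZMod 2) (a b : A) : L :=
  S.H ⟨0, by omega⟩ ⟨1, hN⟩ a b - sgn (d * e) • S.H ⟨0, by omega⟩ ⟨1, hN⟩ 1 (b * a)

/-- `L` is generated, as a Lie superalgebra, by the elements `F i j a` (`i ≠ j`). -/
def Generates (S : SteinbergFam AS LS m n) : Prop :=
  lieSpan LS {x | ∃ i j a, i ≠ j ∧ x = S.F i j a} = ⊤

/-- The universal property of the Steinberg Lie superalgebra: `(L, F)` is initial among all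
Lie superalgebras equipped with a family satisfying the Steinberg relations.  Together with
`Generates`, this characterizes `st(m,n,A)` up to isomorphism. -/
def IsInitial (S : SteinbergFam AS LS m n) : Prop :=
  ∀ (L' : Type*) [AddCommGroup L'] [Module K L'] (LS' : LieSuperStr K L')
    (S' : SteinbergFam AS LS' m n),
    ∃! φ : LieSuperHom LS LS', ∀ i j : Fin (m + n), i ≠ j →
      ∀ a : A, φ.toLin (S.F i j a) = S'.F i j a

end SteinbergFam

/-- A surjective homomorphism of Lie superalgebras whose kernel is central. -/
def IsCentralExt {L L' : Type*} [AddCommGroup L] [Module K L] [AddCommGroup L'] [Module K L']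
    {LS' : LieSuperStr K L'} {LS : LieSuperStr K L} (τ : LieSuperHom LS' LS) : Prop :=
  Function.Surjective τ.toLin ∧ ∀ z : L', τ.toLin z = 0 → ∀ y : L', LS'.bracket z y = 0

/-- A central extension `τ : Lu → L` is universal if every central extension of `L` receives a
unique homomorphism from `Lu` over `L`. -/
def IsUniversalCentralExt {L Lu : Type*} [AddCommGroup L] [Module K L]
    [AddCommGroup Lu] [Module K Lu] {LSu : LieSuperStr K Lu} {LS : LieSuperStr K L}
    (τ : LieSuperHom LSu LS) : Prop :=
  IsCentralExt τ ∧
    ∀ (L' : Type*) [AddCommGroup L'] [Module K L'] (LS' : LieSuperStr K L')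
      (τ' : LieSuperHom LS' LS), IsCentralExt τ' →
      ∃! ψ : LieSuperHom LSu LS', ∀ x : Lu, τ'.toLin (ψ.toLin x) = τ.toLin x

/-- `A` is free as a `K`-module, with a basis containing `1`. -/
def HasBasisContainingOne (A : Type*) [Ring A] [Algebra K A] : Prop :=
  ∃ s : Set A, (1 : A) ∈ s ∧ Nonempty (Module.Basis s K A)

end Preamble

/-!
Each identity comes from the super Leibniz rule
`⁅⁅x, y⁆, z⁆ = ⁅x, ⁅y, z⁆⁆ - (-1)^{|x||y|} ⁅y, ⁅x, z⁆⁆` (a rewriting of the super Jacobi identity)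
applied to `H_ij(a,b) = ⁅F_ij(a), F_ji(b)⁆`, the inner brackets being evaluated by the Steinberg
relations. For `[H_ij(a,b), F_ij(c)]` no relation applies directly; one writes
`F_ij(c) = ⁅F_ik(c), F_kj(1)⁆` through a third index `k`, which is where `m + n ≥ 3` is needed.
The identities for `h(a,b)` follow by sorting the indices of `F` according to how they meet the
indices `1, 2` in the definition of `h`. All signs are identities between parities in `ℤ/2`,
verified by running through the finitely many parity assignments.
-/

namespace LieSuperStr

variable {K L : Type*} [CommRing K] [AddCommGroup L] [Module K L] (LS : LieSuperStr K L)

theorem bracket_zsmul_left (t : ℤ) (x y : L) :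
    LS.bracket (t • x) y = t • LS.bracket x y := by
  simp

theorem bracket_bracket {d e f : ZMod 2} {x y z : L}
    (hx : x ∈ LS.grading d) (hy : y ∈ LS.grading e) (hz : z ∈ LS.grading f) :
    LS.bracket (LS.bracket x y) z =
      LS.bracket x (LS.bracket y z) - sgn (d * e) • LS.bracket y (LS.bracket x z) := by
  have jacobi := LS.jacobi x y z hx hy hz
  rw [LS.skew _ x (LS.bracket_mem hy hz) hx, LS.skew z x hz hx, bracket_zsmul_left,
    LS.skew _ y (LS.bracket_mem hx hz) hy] at jacobi
  linear_combination (norm := skip) sgn (d * f) • jacobi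
  clear jacobi hx hy hz
  match_scalars <;> revert d e f <;> decide

theorem leibniz {d e f : ZMod 2} {x y z : L}
    (hx : x ∈ LS.grading d) (hy : y ∈ LS.grading e) (hz : z ∈ LS.grading f) :
    LS.bracket x (LS.bracket y z) =
      LS.bracket (LS.bracket x y) z + sgn (d * e) • LS.bracket y (LS.bracket x z) := by
  rw [LS.bracket_bracket hx hy hz, sub_add_cancel]

end LieSuperStr

namespace SteinbergFam

variable {K A L : Type*} [CommRing K] [Ring A] [Algebra K A] [AddCommGroup L] [Module K L]
  {AS : SuperAlgStr K A} {LS : LieSuperStr K L} {m n : ℕ} (S : SteinbergFam AS LS m n)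
  {d e f : ZMod 2} {a b c : A}

theorem H_eq_neg_sgn_smul_H (ha : a ∈ AS.grading d) (hb : b ∈ AS.grading e)
    {i j : Fin (m + n)} (hij : i ≠ j) :
    S.H i j a b =
      -(sgn ((idxdeg m i + idxdeg m j + d) * (idxdeg m i + idxdeg m j + e))) • S.H j i b a :=
  LS.skew _ _ (S.F_mem i j a hij ha) (add_comm (idxdeg m j) _ ▸ S.F_mem j i b hij.symm hb)

variable {i j k : Fin (m + n)}

theorem bracket_H_F_fst_fst (ha : a ∈ AS.grading d) (hb : b ∈ AS.grading e)
    (hc : c ∈ AS.grading f) (hij : i ≠ j) (hik : i ≠ k) (hjk : j ≠ k) :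
    LS.bracket (S.H i j a b) (S.F i k c) = S.F i k (a * b * c) := by
  rw [H, LS.bracket_bracket (S.F_mem i j a hij ha) (S.F_mem j i b hij.symm hb)
      (S.F_mem i k c hik hc), S.rel_mul j i k hij.symm hik hjk, S.rel_mul i j k hij hjk hik,
    S.rel_zero i j i k hij hik hij.symm hik, map_zero, smul_zero, sub_zero, mul_assoc]

theorem bracket_H_F_snd_fst (ha : a ∈ AS.grading d) (hb : b ∈ AS.grading e)
    (hc : c ∈ AS.grading f) (hij : i ≠ j) (hik : i ≠ k) (hjk : j ≠ k) :
    LS.bracket (S.H i j a b) (S.F j k c) =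
      -(sgn ((idxdeg m i + idxdeg m j + d) * (idxdeg m i + idxdeg m j + e))) •
        S.F j k (b * a * c) := by
  rw [S.H_eq_neg_sgn_smul_H ha hb hij, LS.bracket_zsmul_left,
    S.bracket_H_F_fst_fst hb ha hc hij.symm hjk hik]

theorem bracket_H_F_fst_snd (ha : a ∈ AS.grading d) (hb : b ∈ AS.grading e)
    (hc : c ∈ AS.grading f) (hij : i ≠ j) (hik : i ≠ k) (hjk : j ≠ k) :
    LS.bracket (S.H i j a b) (S.F k i c) =
      -(sgn ((d + e) * (idxdeg m i + idxdeg m k + f))) • S.F k i (c * a * b) := by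
  have hFa := S.F_mem i j a hij ha
  have hFc := S.F_mem k i c hik.symm hc
  rw [H, LS.bracket_bracket hFa (S.F_mem j i b hij.symm hb) hFc,
    S.rel_zero j i k i hij.symm hik.symm hik hij.symm, map_zero, zero_sub,
    LS.skew _ _ hFa hFc, S.rel_mul k i j hik.symm hij hjk.symm, map_zsmul,
    LS.skew _ _ (S.F_mem j i b hij.symm hb) (S.F_mem k j (c * a) hjk.symm (AS.mul_mem hc ha)),
    S.rel_mul k j i hjk.symm hij.symm hik.symm]
  clear ha hb hc hFa hFc
  match_scalars
  generalize idxdeg m i = p, idxdeg m j = q, idxdeg m k = r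
  revert p q r d e f
  decide

theorem bracket_H_F_snd_snd (ha : a ∈ AS.grading d) (hb : b ∈ AS.grading e)
    (hc : c ∈ AS.grading f) (hij : i ≠ j) (hik : i ≠ k) (hjk : j ≠ k) :
    LS.bracket (S.H i j a b) (S.F k j c) =
      sgn ((idxdeg m i + idxdeg m j + d) * (idxdeg m i + idxdeg m j + e) +
        (d + e) * (idxdeg m j + idxdeg m k + f)) • S.F k j (c * b * a) := by
  have hFa := S.F_mem i j a hij ha
  have hFb := S.F_mem j i b hij.symm hb
  have hFc := S.F_mem k j c hjk.symm hc
  rw [H, LS.bracket_bracket hFa hFb hFc, LS.skew _ _ hFb hFc,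
    S.rel_mul k j i hjk.symm hij.symm hik.symm, map_zsmul,
    LS.skew _ _ hFa (S.F_mem k i (c * b) hik.symm (AS.mul_mem hc hb)),
    S.rel_mul k i j hik.symm hij hjk.symm, S.rel_zero i j k j hij hjk.symm hjk hij, map_zero,
    smul_zero, sub_zero]
  clear ha hb hc hFa hFb hFc
  match_scalars
  generalize idxdeg m i = p, idxdeg m j = q, idxdeg m k = r
  revert p q r d e f
  decide

theorem bracket_H_F_same (ha : a ∈ AS.grading d) (hb : b ∈ AS.grading e)
    (hc : c ∈ AS.grading f) (hij : i ≠ j) (hik : i ≠ k) (hjk : j ≠ k) :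
    LS.bracket (S.H i j a b) (S.F i j c) =
      S.F i j (a * b * c +
        sgn (idxdeg m i + idxdeg m j + d * e + e * f + f * d) • (c * b * a)) := by
  have hH : S.H i j a b ∈
      LS.grading (idxdeg m i + idxdeg m j + d + (idxdeg m j + idxdeg m i + e)) :=
    LS.bracket_mem (S.F_mem i j a hij ha) (S.F_mem j i b hij.symm hb)
  rw [← mul_one c, ← S.rel_mul i k j hik hjk.symm hij,
    LS.leibniz hH (S.F_mem i k c hik hc) (S.F_mem k j 1 hjk.symm AS.one_mem),
    S.bracket_H_F_fst_fst ha hb hc hij hik hjk, S.rel_mul i k j hik hjk.symm hij,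
    S.bracket_H_F_snd_snd ha hb AS.one_mem hij hik hjk, map_zsmul,
    S.rel_mul i k j hik hjk.symm hij]
  clear ha hb hc hH
  simp only [one_mul, mul_one, mul_assoc, map_add, map_zsmul]
  match_scalars
  · rfl
  · generalize idxdeg m i = p, idxdeg m j = q, idxdeg m k = r
    revert p q r d e f
    decide

theorem bracket_H_F_disjoint {l : Fin (m + n)} (ha : a ∈ AS.grading d)
    (hb : b ∈ AS.grading e) (hc : c ∈ AS.grading f) (hij : i ≠ j) (hik : i ≠ k) (hil : i ≠ l)
    (hjk : j ≠ k) (hjl : j ≠ l) (hkl : k ≠ l) :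
    LS.bracket (S.H i j a b) (S.F k l c) = 0 := by
  rw [H, LS.bracket_bracket (S.F_mem i j a hij ha) (S.F_mem j i b hij.symm hb)
      (S.F_mem k l c hkl hc), S.rel_zero j i k l hij.symm hkl hik hjl,
    S.rel_zero i j k l hij hkl hjk hil, map_zero, map_zero, smul_zero, sub_zero]

theorem bracket_h_F_zero_left (hN : 2 < m + n) (ha : a ∈ AS.grading d)
    (hb : b ∈ AS.grading e) (hc : c ∈ AS.grading f) (hi : i ≠ ⟨0, by omega⟩) :
    LS.bracket (S.h (by omega) d e a b) (S.F ⟨0, by omega⟩ i c) =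
      S.F ⟨0, by omega⟩ i ((a * b - sgn (d * e) • (b * a)) * c) := by
  have hba := AS.mul_mem hb ha
  have h01 : (⟨0, by omega⟩ : Fin (m + n)) ≠ ⟨1, by omega⟩ := by simp
  rw [h, map_sub, map_zsmul, LinearMap.sub_apply, LinearMap.smul_apply]
  by_cases hi1 : i = ⟨1, by omega⟩
  · subst hi1
    have h02 : (⟨0, by omega⟩ : Fin (m + n)) ≠ ⟨2, hN⟩ := by simp
    have h12 : (⟨1, by omega⟩ : Fin (m + n)) ≠ ⟨2, hN⟩ := by simp
    rw [S.bracket_H_F_same ha hb hc h01 h02 h12,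
      S.bracket_H_F_same AS.one_mem hba hc h01 h02 h12]
    clear ha hb hc hba
    simp only [sub_mul, smul_mul_assoc, map_add, map_sub, map_zsmul, one_mul, mul_one, mul_assoc]
    match_scalars
    · rfl
    · generalize idxdeg m (⟨0, by omega⟩ : Fin (m + n)) = p,
        idxdeg m (⟨1, by omega⟩ : Fin (m + n)) = q
      revert p q d e f
      decide
    · rfl
  · rw [S.bracket_H_F_fst_fst ha hb hc h01 hi.symm (Ne.symm hi1),
      S.bracket_H_F_fst_fst AS.one_mem hba hc h01 hi.symm (Ne.symm hi1)]
    simp only [sub_mul, smul_mul_assoc, map_sub, map_zsmul, one_mul, mul_assoc]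

theorem bracket_h_F_of_ne_zero (hN : 1 < m + n) (ha : a ∈ AS.grading d)
    (hb : b ∈ AS.grading e) (hc : c ∈ AS.grading f) (hj : j ≠ ⟨0, by omega⟩)
    (hk : k ≠ ⟨0, by omega⟩) (hjk : j ≠ k) :
    LS.bracket (S.h hN d e a b) (S.F j k c) = 0 := by
  have hba := AS.mul_mem hb ha
  have h01 : (⟨0, by omega⟩ : Fin (m + n)) ≠ ⟨1, hN⟩ := by simp
  rw [h, map_sub, map_zsmul, LinearMap.sub_apply, LinearMap.smul_apply, sub_eq_zero]
  by_cases hj1 : j = ⟨1, hN⟩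
  · subst hj1
    rw [S.bracket_H_F_snd_fst ha hb hc h01 hk.symm hjk,
      S.bracket_H_F_snd_fst AS.one_mem hba hc h01 hk.symm hjk]
    clear ha hb hc hba
    simp only [mul_one, mul_assoc, smul_smul]
    congr 1
    generalize idxdeg m (⟨0, by omega⟩ : Fin (m + n)) = p,
      idxdeg m (⟨1, hN⟩ : Fin (m + n)) = q
    revert p q d e
    decide
  by_cases hk1 : k = ⟨1, hN⟩
  · subst hk1
    rw [S.bracket_H_F_snd_snd ha hb hc h01 hj.symm hjk.symm,
      S.bracket_H_F_snd_snd AS.one_mem hba hc h01 hj.symm hjk.symm]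
    clear ha hb hc hba
    simp only [mul_one, mul_assoc, smul_smul]
    congr 1
    generalize idxdeg m (⟨0, by omega⟩ : Fin (m + n)) = p,
      idxdeg m (⟨1, hN⟩ : Fin (m + n)) = q, idxdeg m j = r
    revert p q r d e f
    decide
  rw [S.bracket_H_F_disjoint ha hb hc h01 hj.symm hk.symm (Ne.symm hj1) (Ne.symm hk1) hjk,
    S.bracket_H_F_disjoint AS.one_mem hba hc h01 hj.symm hk.symm (Ne.symm hj1) (Ne.symm hk1)
      hjk, smul_zero]

end SteinbergFam

/-- Lemma 2.1: the standard identities in the Steinberg Lie superalgebra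
`st(m,n,A)`, for homogeneous `a, b, c ∈ A` and pairwise distinct indices `i, j, k, l`. -/
theorem steinberg_identities
    {K A L : Type*} [CommRing K] [Ring A] [Algebra K A] [AddCommGroup L] [Module K L]
    (AS : SuperAlgStr K A)
    (m n : ℕ) (hmn : 3 ≤ m + n)
    (LS : LieSuperStr K L) (S : SteinbergFam AS LS m n) :
    ∀ (d e f : ZMod 2) (a b c : A),
      a ∈ AS.grading d → b ∈ AS.grading e → c ∈ AS.grading f →
      ∀ i j k l : Fin (m + n), i ≠ j → i ≠ k → i ≠ l → j ≠ k → j ≠ l → k ≠ l →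
      -- (1)
      (S.H i j a b =
        -(sgn ((idxdeg m i + idxdeg m j + d) * (idxdeg m i + idxdeg m j + e))) • S.H j i b a) ∧
      -- (2)
      (LS.bracket (S.H i j a b) (S.F i k c) = S.F i k (a * b * c)) ∧
      -- (3)
      (LS.bracket (S.H i j a b) (S.F k i c) =
        -(sgn ((d + e) * (idxdeg m i + idxdeg m k + f))) • S.F k i (c * a * b)) ∧
      -- (4)
      (LS.bracket (S.H i j a b) (S.F k j c) =
        sgn ((idxdeg m i + idxdeg m j + d) * (idxdeg m i + idxdeg m j + e) +
          (d + e) * (idxdeg m j + idxdeg m k + f)) • S.F k j (c * b * a)) ∧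
      -- (5)
      (LS.bracket (S.H i j a b) (S.F i j c) =
        S.F i j (a * b * c +
          sgn (idxdeg m i + idxdeg m j + d * e + e * f + f * d) • (c * b * a))) ∧
      -- (6)
      (LS.bracket (S.H i j a b) (S.F k l c) = 0) ∧
      -- (7): for any index `i₁ ≠ 1` (`0`-based: `i₁ ≠ 0`)
      (∀ i₁ : Fin (m + n), i₁ ≠ ⟨0, by omega⟩ →
        LS.bracket (S.h (by omega) d e a b) (S.F ⟨0, by omega⟩ i₁ c) =
          S.F ⟨0, by omega⟩ i₁ ((a * b - sgn (d * e) • (b * a)) * c)) ∧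
      -- (8): for indices `j₁, k₁ ≥ 2` (`0`-based: nonzero)
      (∀ j₁ k₁ : Fin (m + n), j₁ ≠ ⟨0, by omega⟩ → k₁ ≠ ⟨0, by omega⟩ → j₁ ≠ k₁ →
        LS.bracket (S.h (by omega) d e a b) (S.F j₁ k₁ c) = 0) := by
  intro d e f a b c ha hb hc i j k l hij hik hil hjk hjl hkl
  exact ⟨S.H_eq_neg_sgn_smul_H ha hb hij, S.bracket_H_F_fst_fst ha hb hc hij hik hjk,
    S.bracket_H_F_fst_snd ha hb hc hij hik hjk, S.bracket_H_F_snd_snd ha hb hc hij hik hjk,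
    S.bracket_H_F_same ha hb hc hij hik hjk,
    S.bracket_H_F_disjoint ha hb hc hij hik hil hjk hjl hkl,
    fun _ hi => S.bracket_h_F_zero_left hmn ha hb hc hi,
    fun _ _ hj hk hjk => S.bracket_h_F_of_ne_zero _ ha hb hc hj hk hjk⟩
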